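/- Let F be a finite field with q elements, let m ≥ 1, n ≥ 2, let 1 ≤ t ≤ n, and let ẽ ∈ F^n have Hamming weight t. Then Σ_{H ∈ F^{m×n}, H·ẽ = 0} (number of projective equivalence classes of {e ∈ ker(H) : wt(e) = t}) = q^{m(n−1)} + (C(n,t)·(q−1)^{t−1} − 1)·q^{m(n−2)}. Equivalently, for H uniform among the q^{m(n−1)} matrices with H·ẽ = 0, the expected number of collinearity classes of weight-t kernel vectors equals 1 + (C(n,t)·(q−1)^{t−1} − 1)/q^m. -/

import Mathlib

/-!
Double counting the pairs `(H, e)` with `H ẽ = 0`, `H e = 0` and `wt e = t`: for each of the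
`q - 1` nonzero multiples `e` of `ẽ` the condition `H e = 0` is implied by `H ẽ = 0`, leaving
`q^(m(n-1))` matrices, while for each of the other `C(n,t)(q-1)^t - (q-1)` vectors of weight `t`
the pair `ẽ, e` is linearly independent and `q^(m(n-2))` matrices kill both (the rows of `H`
range independently over the annihilator of `span(ẽ, e)`, of dimension `n - 2`). Each projective
class of weight-`t` kernel vectors consists of exactly `q - 1` vectors, so dividing by `q - 1`
gives the count of classes.
-/

open Finset Matrix Module

variable {F : Type*} [Field F]

section ProjectiveClasses

variable (F) {V : Type*} [AddCommGroup V] [Module F V]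

def projClass (e : V) : Set V := {x | ∃ α : F, α ≠ 0 ∧ x = α • e}

variable {F}

theorem smul_mem_projClass {e x : V} (hx : x ∈ projClass F e) {β : F} (hβ : β ≠ 0) :
    β • x ∈ projClass F e := by
  obtain ⟨α, hα, rfl⟩ := hx
  exact ⟨β * α, mul_ne_zero hβ hα, (mul_smul β α e).symm⟩

theorem projClass_eq_projClass_iff {e e' : V} :
    projClass F e' = projClass F e ↔ e' ∈ projClass F e := by
  refine ⟨fun h => h ▸ ⟨1, one_ne_zero, (one_smul F e').symm⟩, fun h => ?_⟩
  obtain ⟨α, hα, rfl⟩ := h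
  ext x
  refine ⟨fun hx => ?_, fun hx => ?_⟩
  · obtain ⟨β, hβ, rfl⟩ := hx
    exact smul_mem_projClass ⟨α, hα, rfl⟩ hβ
  · obtain ⟨β, hβ, rfl⟩ := hx
    exact ⟨β * α⁻¹, mul_ne_zero hβ (inv_ne_zero hα),
      by rw [smul_smul, inv_mul_cancel_right₀ hα]⟩

variable [Fintype F]

theorem ncard_projClass {e : V} (he : e ≠ 0) : (projClass F e).ncard = Fintype.card F - 1 := by
  classical
  have himage : projClass F e = (· • e) '' {α : F | α ≠ 0} := by
    ext x
    simp [projClass, eq_comm]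
  rw [himage, Set.ncard_image_of_injective _ (smul_left_injective F he),
    Set.ncard_eq_toFinset_card', Set.toFinset_ofPred, filter_ne', card_erase_of_mem (mem_univ _),
    card_univ]

theorem ncard_projClasses_mul (S : Finset V) (hS0 : ∀ e ∈ S, e ≠ 0)
    (hS : ∀ e ∈ S, ∀ α : F, α ≠ 0 → α • e ∈ S) :
    {O | ∃ e ∈ S, O = projClass F e}.ncard * (Fintype.card F - 1) = #S := by
  classical
  have himage : {O | ∃ e ∈ S, O = projClass F e} = ↑(S.image (projClass F)) := by
    ext O
    simp [eq_comm]
  rw [himage, Set.ncard_coe_finset, card_eq_sum_card_image (projClass F) S,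
    sum_const_nat fun O hO => ?_]
  obtain ⟨e, he, rfl⟩ := mem_image.1 hO
  have hfiber : (↑({e' ∈ S | projClass F e' = projClass F e} : Finset V) : Set V) =
      projClass F e := by
    ext x
    simp only [coe_filter, Set.mem_ofPred_eq, projClass_eq_projClass_iff, and_iff_right_iff_imp]
    rintro ⟨α, hα, rfl⟩
    exact hS e he α hα
  rw [← Set.ncard_coe_finset, hfiber, ncard_projClass (hS0 e he)]

end ProjectiveClasses

section HammingWeight

variable [DecidableEq F] {κ : Type*} [Fintype κ]

theorem hammingNorm_smul_of_ne_zero {α : F} (hα : α ≠ 0) (x : κ → F) :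
    hammingNorm (α • x) = hammingNorm x :=
  hammingNorm_smul (fun _ => IsSMulRegular.of_ne_zero hα) x

variable [Fintype F] [DecidableEq κ]

theorem card_filter_support_eq (s : Finset κ) :
    #{x : κ → F | ({i | x i ≠ 0} : Finset κ) = s} = (Fintype.card F - 1) ^ #s := by
  have hpi : ({x : κ → F | ({i | x i ≠ 0} : Finset κ) = s} : Finset _) =
      Fintype.piFinset fun i => if i ∈ s then ({a | a ≠ 0} : Finset F) else {0} := by
    ext x
    simp only [mem_filter, mem_univ, true_and, Fintype.mem_piFinset, Finset.ext_iff]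
    refine forall_congr' fun i => ?_
    split_ifs with hi <;> simp [hi]
  simp only [hpi, Fintype.card_piFinset, apply_ite card, card_singleton, prod_ite_mem, univ_inter,
    prod_const, filter_ne', card_erase_of_mem (mem_univ _), card_univ]

theorem card_filter_hammingNorm_eq (t : ℕ) :
    #{x : κ → F | hammingNorm x = t} =
      (Fintype.card κ).choose t * (Fintype.card F - 1) ^ t := by
  rw [card_eq_sum_card_fiberwise (f := fun x : κ → F => ({i | x i ≠ 0} : Finset κ))
    (t := powersetCard t univ) fun x hx => by simpa [hammingNorm] using hx]
  rw [sum_congr rfl fun s hs => ?_, sum_const, card_powersetCard, card_univ, smul_eq_mul]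
  rw [mem_powersetCard_univ] at hs
  rw [filter_filter, ← hs, ← card_filter_support_eq s]
  congr 1
  ext x
  simp only [mem_filter, mem_univ, true_and, hammingNorm, and_iff_right_iff_imp]
  rintro rfl
  rfl

theorem ncard_projClasses_ker_hammingNorm_mul {μ : Type*} [Fintype μ] (H : Matrix μ κ F)
    {t : ℕ} (ht : t ≠ 0) :
    {O | ∃ e, H *ᵥ e = 0 ∧ hammingNorm e = t ∧ O = projClass F e}.ncard *
        (Fintype.card F - 1) =
      #{e | H *ᵥ e = 0 ∧ hammingNorm e = t} := by
  refine Eq.trans ?_ (ncard_projClasses_mul (F := F) {e | H *ᵥ e = 0 ∧ hammingNorm e = t}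
    (fun e he => ?_) fun e he α hα => ?_)
  · simp only [mem_filter, mem_univ, true_and, and_assoc]
  · rw [mem_filter] at he
    exact hammingNorm_ne_zero_iff.1 (he.2.2 ▸ ht)
  · simp only [mem_filter, mem_univ, true_and, mulVec_smul,
      hammingNorm_smul_of_ne_zero hα] at he ⊢
    exact ⟨by rw [he.1, smul_zero], he.2⟩

end HammingWeight

section Kernels

variable [Fintype F] [DecidableEq F]
  {ι κ μ : Type*} [Fintype ι] [Fintype κ] [Fintype μ] [DecidableEq κ] [DecidableEq μ]

theorem card_filter_mulVec_eq_zero (A : Matrix ι κ F) :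
    #{x : κ → F | A *ᵥ x = 0} = Fintype.card F ^ (Fintype.card κ - A.rank) := by
  have hrk := LinearMap.finrank_range_add_finrank_ker A.mulVecLin
  rw [finrank_fintype_fun_eq_card, ← Matrix.rank] at hrk
  rw [← Fintype.card_subtype, ← Nat.card_eq_fintype_card]
  change Nat.card (LinearMap.ker A.mulVecLin) = _
  rw [Module.natCard_eq_pow_finrank (K := F), Nat.card_eq_fintype_card]
  congr 1
  omega

theorem card_filter_forall_mulVec_eq_zero {v : ι → κ → F} (hv : LinearIndependent F v) :
    #{H : Matrix μ κ F | ∀ i, H *ᵥ v i = 0} =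
      Fintype.card F ^ (Fintype.card μ * (Fintype.card κ - Fintype.card ι)) := by
  have hrows (H : Matrix μ κ F) : (∀ i, H *ᵥ v i = 0) ↔ ∀ a, of v *ᵥ H a = 0 := by
    simp only [funext_iff, mulVec, of_apply, Pi.zero_apply, dotProduct_comm (v _)]
    exact forall_comm
  rw [← Fintype.card_subtype, Fintype.card_congr ((Equiv.subtypeEquivRight hrows).trans
      (Equiv.subtypePiEquivPi (p := fun _ x => of v *ᵥ x = 0))),
    Fintype.card_fun, Fintype.card_subtype, card_filter_mulVec_eq_zero,
    LinearIndependent.rank_matrix (M := of v) hv, ← pow_mul, mul_comm]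

theorem card_filter_mulVec_eq_zero_of_ne_zero {v : κ → F} (hv : v ≠ 0) :
    #{H : Matrix μ κ F | H *ᵥ v = 0} =
      Fintype.card F ^ (Fintype.card μ * (Fintype.card κ - 1)) := by
  simpa using card_filter_forall_mulVec_eq_zero (μ := μ)
    (linearIndependent_unique_iff.2 hv : LinearIndependent F ![v])

theorem card_filter_mulVec_eq_zero_and_of_notMem_projClass {v w : κ → F} (hv : v ≠ 0)
    (hw : w ≠ 0) (hvw : w ∉ projClass F v) :
    #{H : Matrix μ κ F | H *ᵥ v = 0 ∧ H *ᵥ w = 0} =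
      Fintype.card F ^ (Fintype.card μ * (Fintype.card κ - 2)) := by
  have hli : LinearIndependent F ![v, w] := by
    refine (LinearIndependent.pair_iff' hv).2 fun a hav => ?_
    by_cases ha : a = 0
    · exact hw (by simpa [ha] using hav.symm)
    · exact hvw ⟨a, ha, hav.symm⟩
  simpa [Fin.forall_fin_two] using card_filter_forall_mulVec_eq_zero (μ := μ) hli

theorem sum_card_filter_mulVec_eq_zero_and {v : κ → F} (hv : v ≠ 0) :
    ∑ e ∈ {e : κ → F | hammingNorm e = hammingNorm v},
        #{H : Matrix μ κ F | H *ᵥ v = 0 ∧ H *ᵥ e = 0} =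
      (Fintype.card F - 1) * Fintype.card F ^ (Fintype.card μ * (Fintype.card κ - 1)) +
        (#{e : κ → F | hammingNorm e = hammingNorm v} - (Fintype.card F - 1)) *
          Fintype.card F ^ (Fintype.card μ * (Fintype.card κ - 2)) := by
  classical
  set T : Finset (κ → F) := {e | hammingNorm e = hammingNorm v}
  have hcoll : #{e ∈ T | e ∈ projClass F v} = Fintype.card F - 1 := by
    rw [← ncard_projClass hv, ← Set.ncard_coe_finset]
    congr 1
    ext e
    simp only [coe_filter, Set.mem_ofPred_eq, T, mem_filter, mem_univ, true_and,
      and_iff_right_iff_imp]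
    rintro ⟨α, hα, rfl⟩
    exact hammingNorm_smul_of_ne_zero hα v
  have hcard (e) (he : e ∈ T) : #{H : Matrix μ κ F | H *ᵥ v = 0 ∧ H *ᵥ e = 0} =
      if e ∈ projClass F v then Fintype.card F ^ (Fintype.card μ * (Fintype.card κ - 1))
      else Fintype.card F ^ (Fintype.card μ * (Fintype.card κ - 2)) := by
    split_ifs with hcoll
    · obtain ⟨α, -, rfl⟩ := hcoll
      rw [← card_filter_mulVec_eq_zero_of_ne_zero hv]
      congr 1
      ext H
      simp +contextual [mulVec_smul]
    · have he0 : e ≠ 0 := by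
        rw [mem_filter] at he
        exact hammingNorm_ne_zero_iff.1 (he.2 ▸ hammingNorm_ne_zero_iff.2 hv)
      exact card_filter_mulVec_eq_zero_and_of_notMem_projClass hv he0 hcoll
  have hsplit := card_filter_add_card_filter_not (s := T) (p := (· ∈ projClass F v))
  rw [sum_congr rfl hcard, sum_ite, sum_const, sum_const, smul_eq_mul, smul_eq_mul, hcoll]
  congr 2
  omega

end Kernels

theorem sum_projective_solutions_count_general
    (F : Type) [Field F] [Fintype F] [DecidableEq F]
    (q : ℕ) (hq : Fintype.card F = q)
    (m n t : ℕ) (ht1 : 1 ≤ t)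
    (et : Fin n → F)
    (het : (Finset.univ.filter (fun i => et i ≠ 0)).card = t) :
    ∑ H ∈ Finset.univ.filter
        (fun H : Matrix (Fin m) (Fin n) F => H.mulVec et = 0),
      Set.ncard {O : Set (Fin n → F) |
        ∃ e : Fin n → F, H.mulVec e = 0 ∧
          (Finset.univ.filter (fun i => e i ≠ 0)).card = t ∧
          O = {x : Fin n → F | ∃ α : F, α ≠ 0 ∧ x = α • e}}
      = q ^ (m * (n - 1))
        + (Nat.choose n t * (q - 1) ^ (t - 1) - 1) * q ^ (m * (n - 2)) := by
  subst hq
  change hammingNorm et = t at het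
  have het0 : et ≠ 0 := hammingNorm_pos_iff.1 (het ▸ ht1)
  have hq1 : 0 < Fintype.card F - 1 := Nat.sub_pos_of_lt Fintype.one_lt_card
  refine Nat.eq_of_mul_eq_mul_right hq1 ?_
  calc _ = ∑ H ∈ {H : Matrix (Fin m) (Fin n) F | H *ᵥ et = 0},
        #{e | H *ᵥ e = 0 ∧ hammingNorm e = t} := by
        rw [sum_mul]
        exact sum_congr rfl fun H _ => ncard_projClasses_ker_hammingNorm_mul H (by omega)
    _ = ∑ e ∈ {e : Fin n → F | hammingNorm e = t},
        #{H : Matrix (Fin m) (Fin n) F | H *ᵥ et = 0 ∧ H *ᵥ e = 0} := by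
        convert sum_card_bipartiteAbove_eq_sum_card_bipartiteBelow
          (s := {H : Matrix (Fin m) (Fin n) F | H *ᵥ et = 0}) (t := {e | hammingNorm e = t})
          (fun H e => H *ᵥ e = 0) using 3 <;>
          simp [bipartiteAbove, bipartiteBelow, filter_filter, and_comm]
    _ = (Fintype.card F - 1) * Fintype.card F ^ (m * (n - 1)) +
        (n.choose t * (Fintype.card F - 1) ^ t - (Fintype.card F - 1)) *
          Fintype.card F ^ (m * (n - 2)) := by
        rw [← het, sum_card_filter_mulVec_eq_zero_and het0, card_filter_hammingNorm_eq]
        simp only [Fintype.card_fin]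
    _ = _ := by
        rw [← pow_sub_one_mul (show t ≠ 0 by omega) (Fintype.card F - 1), ← mul_assoc,
          ← Nat.sub_one_mul]
        ring

/-- For a fixed vector `ẽ` of Hamming weight `t`, summing over the matrices `H`
with `H·ẽ = 0` the number of projective (collinearity) classes of weight-`t`
vectors of `ker(H)` gives `q^(m(n−1)) + (C(n,t)·(q−1)^(t−1) − 1)·q^(m(n−2))`:
the expected number of classes is `1 + (C(n,t)·(q−1)^(t−1) − 1)/q^m`. -/
theorem sum_projective_solutions_count
    (F : Type) [Field F] [Fintype F] [DecidableEq F]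
    (q : ℕ) (hq : Fintype.card F = q)
    (m n t : ℕ) (hm : 1 ≤ m) (hn : 2 ≤ n) (ht1 : 1 ≤ t) (htn : t ≤ n)
    (et : Fin n → F)
    (het : (Finset.univ.filter (fun i => et i ≠ 0)).card = t) :
    ∑ H ∈ Finset.univ.filter
        (fun H : Matrix (Fin m) (Fin n) F => H.mulVec et = 0),
      Set.ncard {O : Set (Fin n → F) |
        ∃ e : Fin n → F, H.mulVec e = 0 ∧
          (Finset.univ.filter (fun i => e i ≠ 0)).card = t ∧
          O = {x : Fin n → F | ∃ α : F, α ≠ 0 ∧ x = α • e}}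
      = q ^ (m * (n - 1))
        + (Nat.choose n t * (q - 1) ^ (t - 1) - 1) * q ^ (m * (n - 2)) :=
  sum_projective_solutions_count_general F q hq m n t ht1 et het
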